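/- arXiv:1011.2266 — 3 statements merged into one kernel-verified Lean document; each statement's English description precedes it below -/
import Mathlib

section
/- Let X be a convexity space and x, y ∈ X. The subspace topology that C(x,y) inherits from X coincides with the order topology induced by the linear order on C(x,y) given by z ≤ t iff z ∈ C(x,t). -/
/-- A set `A` is convex with respect to the map `C` assigning to each pair of points
`x, y` the set `C x y` ("the minimal connected set joining them") if `C u v ⊆ A`
whenever `u, v ∈ A`. -/
def ConvexWRT {X : Type*} (C : X → X → Set X) (A : Set X) : Prop :=
  ∀ u ∈ A, ∀ v ∈ A, C u v ⊆ A

/-- A convexity space is a Hausdorff topological space `X` together with a map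
`C : X → X → Set X` which is continuous as a map `X × X → 𝒫(X)` (where `𝒫(X)` carries the
topology generated by the sets `{C | C ⊆ U}`, `U` open), such that
(C1) each `C x y` is convex, (C2) each `C x y` is minimal among the connected subsets of `X`
containing both `x` and `y`, and (C3) `X` has a basis of convex open sets. -/
structure IsConvexitySpace {X : Type*} [TopologicalSpace X] [T2Space X]
    (C : X → X → Set X) : Prop where
  /-- `C x y` contains `x`. -/
  mem_left : ∀ x y : X, x ∈ C x y
  /-- `C x y` contains `y`. -/
  mem_right : ∀ x y : X, y ∈ C x y
  /-- `C x y` is connected. -/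
  preconnected : ∀ x y : X, IsPreconnected (C x y)
  /-- (C1): `C x y` is convex. -/
  convex : ∀ x y : X, ConvexWRT C (C x y)
  /-- (C2): `C x y` is minimal among the connected subsets of `X` containing `x` and `y`:
  no proper subset of `C x y` containing `x` and `y` is connected. -/
  minimal : ∀ x y : X, ∀ A : Set X, A ⊆ C x y → x ∈ A → y ∈ A →
    IsPreconnected A → A = C x y
  /-- Continuity of `(x, y) ↦ C x y`: for every open `W ⊇ C x y` there are open
  neighbourhoods `V` of `x` and `V'` of `y` with `C x' y' ⊆ W` for `x' ∈ V`, `y' ∈ V'`. -/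
  continuity : ∀ x y : X, ∀ W : Set X, IsOpen W → C x y ⊆ W →
    ∃ V V' : Set X, IsOpen V ∧ IsOpen V' ∧ x ∈ V ∧ y ∈ V' ∧
      ∀ x' ∈ V, ∀ y' ∈ V', C x' y' ⊆ W
  /-- (C3): `X` has a basis of convex open sets. -/
  basis : ∀ x : X, ∀ W : Set X, IsOpen W → x ∈ W →
    ∃ V : Set X, IsOpen V ∧ x ∈ V ∧ V ⊆ W ∧ ConvexWRT C V

/-!
Fix a base point `p`. The points `w ∈ C(p,a)` with `a ∈ C(p,w)` form a closed part of `C(p,a)`,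
whose complement `S` (the points strictly below `a`) contains `p` and is a union of the connected
sets `C(p,w)`. Connectedness of `C(p,a)` yields a point `c` of the closed part lying in the closure
of `S`; then `S ∪ {c}` is connected, so by minimality it is all of `C(p,c) = C(p,a)`, and the closed
part is just `{c}`. This antisymmetry makes `z ≤ t :↔ z ∈ C(x,t)` a linear order on `C(x,y)`.

The open rays are open in `C(x,y)` because `{w | a ∉ C(x,w)}` is open by continuity of `C`.
Conversely, given `z` in an open `U`, pick a convex open `V` with `z ∈ V ⊆ U`; connectedness of
`C(x,z)` and `C(z,y)` provides points `w₁ ≤ z ≤ w₂` of `V` (strictly, unless `z` is an endpoint),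
and the order interval `(w₁, w₂)` lies in `C(w₁,w₂) ⊆ V`.
-/

namespace IsConvexitySpace

open Set TopologicalSpace Topology

variable {X : Type*} [TopologicalSpace X] [T2Space X] {C : X → X → Set X}

theorem swap (hC : IsConvexitySpace C) : IsConvexitySpace (fun a b => C b a) where
  mem_left a b := hC.mem_right b a
  mem_right a b := hC.mem_left b a
  preconnected a b := hC.preconnected b a
  convex a b u hu v hv := hC.convex b a v hv u hu
  minimal a b A hA ha hb hp := hC.minimal b a A hA hb ha hp
  continuity a b W hW hsub := by
    obtain ⟨V, V', hV, hV', haV, hbV', hsub'⟩ := hC.continuity b a W hW hsub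
    exact ⟨V', V, hV', hV, hbV', haV, fun x' hx' y' hy' => hsub' y' hy' x' hx'⟩
  basis p W hW hp := by
    obtain ⟨V, hV, hpV, hVW, hconv⟩ := hC.basis p W hW hp
    exact ⟨V, hV, hpV, hVW, fun u hu v hv => hconv v hv u hu⟩

theorem same (hC : IsConvexitySpace C) (p : X) : C p p = {p} :=
  (hC.minimal p p {p} (singleton_subset_iff.2 (hC.mem_left p p)) rfl rfl
    isPreconnected_singleton).symm

theorem subset_left_of_mem (hC : IsConvexitySpace C) {p q b : X} (hb : b ∈ C p q) :
    C p b ⊆ C p q :=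
  hC.convex p q p (hC.mem_left p q) b hb

theorem subset_right_of_mem (hC : IsConvexitySpace C) {p q b : X} (hb : b ∈ C p q) :
    C b q ⊆ C p q :=
  hC.convex p q b hb q (hC.mem_right p q)

theorem union_eq_of_mem (hC : IsConvexitySpace C) {p q b : X} (hb : b ∈ C p q) :
    C p b ∪ C b q = C p q :=
  hC.minimal p q _ (union_subset (hC.subset_left_of_mem hb) (hC.subset_right_of_mem hb))
    (Or.inl (hC.mem_left p b)) (Or.inr (hC.mem_right b q))
    ((hC.preconnected p b).union b (hC.mem_right p b) (hC.mem_left b q) (hC.preconnected b q))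

theorem eq_of_mem_of_mem (hC : IsConvexitySpace C) {p a b : X} (hba : b ∈ C p a)
    (hab : a ∈ C p b) : C p b = C p a :=
  hC.minimal p a _ (hC.subset_left_of_mem hba) (hC.mem_left p b) hab (hC.preconnected p b)

theorem isOpen_setOf_notMem (hC : IsConvexitySpace C) (p a : X) : IsOpen {w | a ∉ C p w} := by
  refine isOpen_iff_forall_mem_open.2 fun w hw => ?_
  obtain ⟨V, V', -, hV', hpV, hwV', hsub⟩ := hC.continuity p w {a}ᶜ isOpen_compl_singleton
    (fun u hu hua => hw (mem_singleton_iff.1 hua ▸ hu))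
  exact ⟨V', fun w' hw' ha => hsub p hpV w' hw' ha rfl, hV', hwV'⟩

theorem subset_setOf_notMem (hC : IsConvexitySpace C) {p a w : X}
    (hw : w ∈ {w ∈ C p a | a ∉ C p w}) : C p w ⊆ {w ∈ C p a | a ∉ C p w} :=
  fun _ hw' => ⟨hC.subset_left_of_mem hw.1 hw', fun ha => hw.2 (hC.subset_left_of_mem hw' ha)⟩

theorem isPreconnected_setOf_notMem (hC : IsConvexitySpace C) (p a : X) :
    IsPreconnected {w ∈ C p a | a ∉ C p w} :=
  isPreconnected_of_forall p fun w hw =>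
    ⟨C p w, hC.subset_setOf_notMem hw, hC.mem_left p w, hC.mem_right p w, hC.preconnected p w⟩

theorem subsingleton_setOf_mem (hC : IsConvexitySpace C) (p a : X) :
    {w ∈ C p a | a ∈ C p w}.Subsingleton := by
  rcases eq_or_ne a p with rfl | hap
  · exact (hC.same a ▸ subsingleton_singleton).anti fun w hw => hw.1
  set S := {w ∈ C p a | a ∉ C p w}
  have hpS : p ∈ S := ⟨hC.mem_left p a, by rwa [hC.same, mem_singleton_iff]⟩
  obtain ⟨c, hcK, hac, hcS⟩ : ∃ c ∈ C p a, a ∈ C p c ∧ c ∈ closure S := by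
    by_contra! h
    obtain ⟨w, hwK, hwS, hwS'⟩ := hC.preconnected p a _ _ (hC.isOpen_setOf_notMem p a)
      isClosed_closure.isOpen_compl (fun w hw => (em (a ∈ C p w)).symm.imp id (h w hw))
      ⟨p, hC.mem_left p a, hpS.2⟩ ⟨a, hC.mem_right p a, h a (hC.mem_right p a) (hC.mem_right p a)⟩
    exact hwS' (subset_closure ⟨hwK, hwS⟩)
  have hCpc : C p c = C p a := hC.eq_of_mem_of_mem hcK hac
  have hcS_eq : insert c S = C p a := hCpc ▸ hC.minimal p c (insert c S)
    (insert_subset (hCpc ▸ hC.mem_right p c) (hCpc ▸ fun w hw => hw.1)) (Or.inr hpS)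
    (mem_insert c S) ((hC.isPreconnected_setOf_notMem p a).subset_closure (subset_insert c S)
      (insert_subset hcS subset_closure))
  refine subsingleton_singleton.anti (t := {c}) fun w hw => ?_
  exact ((hcS_eq ▸ hw.1 : w ∈ insert c S)).resolve_right fun h => h.2 hw.2

theorem antisymm (hC : IsConvexitySpace C) {p a b : X} (hab : a ∈ C p b) (hba : b ∈ C p a) :
    a = b :=
  hC.subsingleton_setOf_mem p a ⟨hC.mem_right p a, hC.mem_right p a⟩ ⟨hba, hab⟩


theorem total (hC : IsConvexitySpace C) {x y z t : X} (hz : z ∈ C x y) (ht : t ∈ C x y) :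
    z ∈ C x t ∨ t ∈ C x z := by
  rcases (hC.union_eq_of_mem ht ▸ hz : z ∈ C x t ∪ C t y) with hzt | hzt
  · exact Or.inl hzt
  rcases (hC.union_eq_of_mem hz ▸ ht : t ∈ C x z ∪ C z y) with htz | htz
  · exact Or.inr htz
  · exact Or.inl (hC.swap.antisymm hzt htz ▸ hC.mem_right x t)

theorem mem_iff_mem (hC : IsConvexitySpace C) {x y z t : X} (hz : z ∈ C x y) (ht : t ∈ C x y) :
    z ∈ C x t ↔ t ∈ C z y := by
  refine ⟨fun hzt => ?_, fun htz => ?_⟩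
  · rcases (hC.union_eq_of_mem hz ▸ ht : t ∈ C x z ∪ C z y) with htz | htz
    · exact hC.antisymm htz hzt ▸ hC.mem_left z y
    · exact htz
  · rcases (hC.union_eq_of_mem ht ▸ hz : z ∈ C x t ∪ C t y) with hzt | hzt
    · exact hzt
    · exact hC.swap.antisymm hzt htz ▸ hC.mem_right x t

theorem mem_of_mem_of_mem (hC : IsConvexitySpace C) {x z w₁ w₂ : X} (h₁ : w₁ ∈ C x z)
    (h₂ : z ∈ C x w₂) : z ∈ C w₁ w₂ := by
  rcases (hC.union_eq_of_mem (hC.subset_left_of_mem h₂ h₁) ▸ h₂ : z ∈ C x w₁ ∪ C w₁ w₂)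
    with hz | hz
  · exact hC.antisymm hz h₁ ▸ hC.mem_left w₁ w₂
  · exact hz

theorem exists_mem_ne_of_isOpen (hC : IsConvexitySpace C) {p z : X} {V : Set X} (hV : IsOpen V)
    (hzV : z ∈ V) (hzp : z ≠ p) : ∃ w ∈ C p z, w ∈ V ∧ w ≠ z :=
  hC.preconnected p z V {z}ᶜ hV isOpen_compl_singleton
    (fun w _ => (eq_or_ne w z).imp (fun h : w = z => h ▸ hzV) id)
    ⟨z, hC.mem_right p z, hzV⟩ ⟨p, hC.mem_left p z, hzp.symm⟩

/-- The open rays `{z | a < z}` and `{z | z < a}` of the order `z ≤ t :↔ z ∈ C x t`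
on `C x y`. -/
def orderRays (C : X → X → Set X) (x y : X) : Set (Set (C x y)) :=
  {s | (∃ a : C x y, s = {z : C x y | (a : X) ∈ C x (z : X) ∧ z ≠ a}) ∨
    (∃ a : C x y, s = {z : C x y | (z : X) ∈ C x (a : X) ∧ z ≠ a})}

variable {x y : X}

theorem isOpen_of_mem_orderRays (hC : IsConvexitySpace C) {s : Set (C x y)}
    (hs : s ∈ orderRays C x y) : IsOpen s := by
  rcases hs with ⟨a, rfl⟩ | ⟨a, rfl⟩
  · convert (hC.swap.isOpen_setOf_notMem y a).preimage continuous_subtype_val using 1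
    ext z
    refine ⟨fun ⟨haz, hza⟩ hza' => hza (Subtype.ext (hC.antisymm ?_ haz)), fun hza => ⟨?_, ?_⟩⟩
    · exact (hC.mem_iff_mem z.2 a.2).2 hza'
    · exact (hC.total z.2 a.2).resolve_left fun h => hza ((hC.mem_iff_mem z.2 a.2).1 h)
    · rintro rfl
      exact hza (hC.mem_left _ y)
  · convert (hC.isOpen_setOf_notMem x a).preimage continuous_subtype_val using 1
    ext z
    refine ⟨fun ⟨hza, hne⟩ haz => hne (Subtype.ext (hC.antisymm hza haz)), fun haz => ⟨?_, ?_⟩⟩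
    · exact (hC.total z.2 a.2).resolve_right haz
    · rintro rfl
      exact haz (hC.mem_right x _)

theorem exists_isOpen_forall_exists_mem_left (hC : IsConvexitySpace C) {V : Set X}
    (hV : IsOpen V) {z : C x y} (hzV : (z : X) ∈ V) :
    ∃ O : Set (C x y), IsOpen[generateFrom (orderRays C x y)] O ∧ z ∈ O ∧
      ∀ t ∈ O, ∃ w ∈ V, w ∈ C x t := by
  rcases eq_or_ne (z : X) x with hzx | hzx
  · refine ⟨univ, @isOpen_univ _ (generateFrom _), mem_univ z, fun t _ => ⟨z, hzV, ?_⟩⟩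
    rw [hzx]
    exact hC.mem_left x t
  obtain ⟨w, hwz, hwV, hwz'⟩ := hC.exists_mem_ne_of_isOpen hV hzV hzx
  refine ⟨{t : C x y | w ∈ C x t ∧ t ≠ ⟨w, hC.subset_left_of_mem z.2 hwz⟩},
    isOpen_generateFrom_of_mem (Or.inl ⟨⟨w, _⟩, rfl⟩), ⟨hwz, fun h => hwz' (congrArg Subtype.val h).symm⟩,
    fun t ht => ⟨w, hwV, ht.1⟩⟩

theorem exists_isOpen_forall_exists_mem_right (hC : IsConvexitySpace C) {V : Set X}
    (hV : IsOpen V) {z : C x y} (hzV : (z : X) ∈ V) :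
    ∃ O : Set (C x y), IsOpen[generateFrom (orderRays C x y)] O ∧ z ∈ O ∧
      ∀ t ∈ O, ∃ w ∈ V, (t : X) ∈ C x w := by
  rcases eq_or_ne (z : X) y with hzy | hzy
  · refine ⟨univ, @isOpen_univ _ (generateFrom _), mem_univ z, fun t _ => ⟨z, hzV, ?_⟩⟩
    rw [hzy]
    exact t.2
  obtain ⟨w, hzw, hwV, hwz'⟩ := hC.swap.exists_mem_ne_of_isOpen hV hzV hzy
  have hw : w ∈ C x y := hC.subset_right_of_mem z.2 hzw
  refine ⟨{t : C x y | (t : X) ∈ C x w ∧ t ≠ ⟨w, hw⟩},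
    isOpen_generateFrom_of_mem (Or.inr ⟨⟨w, hw⟩, rfl⟩),
    ⟨(hC.mem_iff_mem z.2 hw).2 hzw, fun h => hwz' (congrArg Subtype.val h).symm⟩,
    fun t ht => ⟨w, hwV, ht.1⟩⟩

theorem isOpen_generateFrom_orderRays_preimage (hC : IsConvexitySpace C) {U : Set X}
    (hU : IsOpen U) : IsOpen[generateFrom (orderRays C x y)] ((↑) ⁻¹' U : Set (C x y)) := by
  refine @isOpen_iff_forall_mem_open _ (generateFrom (orderRays C x y)) _ |>.2 fun z hz => ?_
  obtain ⟨V, hV, hzV, hVU, hVconv⟩ := hC.basis z U hU hz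
  obtain ⟨O₁, hO₁, hzO₁, hO₁V⟩ := hC.exists_isOpen_forall_exists_mem_left hV hzV
  obtain ⟨O₂, hO₂, hzO₂, hO₂V⟩ := hC.exists_isOpen_forall_exists_mem_right hV hzV
  refine ⟨O₁ ∩ O₂, fun t ⟨htO₁, htO₂⟩ => ?_, GenerateOpen.inter _ _ hO₁ hO₂, hzO₁, hzO₂⟩
  obtain ⟨w₁, hw₁V, hw₁t⟩ := hO₁V t htO₁
  obtain ⟨w₂, hw₂V, htw₂⟩ := hO₂V t htO₂
  exact hVU (hVconv w₁ hw₁V w₂ hw₂V (hC.mem_of_mem_of_mem hw₁t htw₂))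

end IsConvexitySpace


/-- part of Proposition 2: Let `X` be a convexity space and `x, y ∈ X`.
The subspace topology that `C(x,y)` inherits from `X` coincides with the order topology
induced by the linear order on `C(x,y)` given by `z ≤ t` iff `z ∈ C(x,t)` (i.e. the topology
generated by the open rays `{z | a < z}` and `{z | z < a}`, where `a < z` means
`a ∈ C(x,z)` and `z ≠ a`, and `z < a` means `z ∈ C(x,a)` and `z ≠ a`). -/
theorem stmt_3 {X : Type*} [TopologicalSpace X] [T2Space X] {C : X → X → Set X}
    (hC : IsConvexitySpace C) (x y : X) :
    (inferInstance : TopologicalSpace (C x y)) =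
      TopologicalSpace.generateFrom
        {s : Set (C x y) |
          (∃ a : C x y, s = {z : C x y | (a : X) ∈ C x (z : X) ∧ z ≠ a}) ∨
          (∃ a : C x y, s = {z : C x y | (z : X) ∈ C x (a : X) ∧ z ≠ a})} := by
  refine le_antisymm (le_generateFrom fun _ => hC.isOpen_of_mem_orderRays) ?_
  rintro _ ⟨U, hU, rfl⟩
  exact hC.isOpen_generateFrom_orderRays_preimage hU
end

section
/- Let X be a convexity space. The closure of any convex subset of X is convex. -/
/-!
Suppose `u, v ∈ closure A` but some `z ∈ C u v` is not. Each `C p q` is ordered from `p` to `q`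
by `a ≤ b ↔ a ∈ C p b`, and connectedness of `C p q` yields a last point `σ` of the closed set
`closure A` on `C u z`, and likewise a last point `τ` on `C v z`. Then `C σ τ` passes through `z`
and meets `closure A` only in `σ` and `τ`. By continuity of `C`, for `a, b ∈ A` close to `σ, τ`
the set `C a b ⊆ A` lies near `C σ τ ∩ closure A = {σ, τ}`, i.e. in two disjoint open sets
around `σ` and `τ`, which contradicts its connectedness.
-/

open Set Topology

theorem IsPreconnected.insert_inter_of_separation {X : Type*} [TopologicalSpace X]
    {S U V : Set X} {r : X} (hS : IsPreconnected S) (hr : r ∈ S) (hU : IsOpen U) (hV : IsOpen V)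
    (hcov : S \ {r} ⊆ U ∪ V) (hdisj : (S \ {r}) ∩ (U ∩ V) = ∅) :
    IsPreconnected (insert r (S ∩ U)) := by
  rw [isPreconnected_iff_subset_of_disjoint]
  intro O₁ O₂ hO₁ hO₂ hcovT hdisjT
  wlog hrO₁ : r ∈ O₁ generalizing O₁ O₂
  · have hrO₂ : r ∈ O₂ := (hcovT (mem_insert r _)).resolve_left hrO₁
    rw [union_comm] at hcovT
    rw [inter_comm O₁] at hdisjT
    exact (this O₂ O₁ hO₂ hO₁ hcovT hdisjT hrO₂).symm
  have hcovS : S ⊆ (O₁ ∪ V) ∪ (O₂ ∩ U) := by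
    intro x hxS
    by_cases hxr : x = r
    · exact Or.inl (Or.inl (hxr ▸ hrO₁))
    rcases hcov ⟨hxS, hxr⟩ with hxU | hxV
    · exact (hcovT (Or.inr ⟨hxS, hxU⟩)).imp Or.inl fun hxO₂ => ⟨hxO₂, hxU⟩
    · exact Or.inl (Or.inr hxV)
  have hdisjS : S ∩ ((O₁ ∪ V) ∩ (O₂ ∩ U)) = ∅ := by
    refine eq_empty_of_forall_notMem fun x ⟨hxS, hx₁, hxO₂, hxU⟩ => ?_
    rcases hx₁ with hxO₁ | hxV
    · exact hdisjT.subset ⟨Or.inr ⟨hxS, hxU⟩, hxO₁, hxO₂⟩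
    · by_cases hxr : x = r
      · exact hdisjT.subset ⟨Or.inl hxr, hxr ▸ hrO₁, hxO₂⟩
      · exact hdisj.subset ⟨⟨hxS, hxr⟩, hxU, hxV⟩
  rcases isPreconnected_iff_subset_of_disjoint.1 hS _ _ (hO₁.union hV) (hO₂.inter hU)
    hcovS hdisjS with hsub | hsub
  · left
    intro x hx
    by_cases hxr : x = r
    · exact hxr ▸ hrO₁
    obtain ⟨hxS, hxU⟩ := hx.resolve_left hxr
    exact (hsub hxS).resolve_right fun hxV => hdisj.subset ⟨⟨hxS, hxr⟩, hxU, hxV⟩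
  · exact (hdisjT.subset ⟨mem_insert r _, hrO₁, (hsub hr).1⟩).elim

namespace IsConvexitySpace

variable {X : Type*} [TopologicalSpace X] [T2Space X] {C : X → X → Set X}

theorem self_eq (hC : IsConvexitySpace C) (x : X) : C x x = {x} :=
  (hC.minimal x x {x} (singleton_subset_iff.2 (hC.mem_left x x)) rfl rfl
    isPreconnected_singleton).symm

theorem comm (hC : IsConvexitySpace C) (x y : X) : C x y = C y x :=
  (hC.convex y x x (hC.mem_right y x) y (hC.mem_left y x)).antisymm
    (hC.convex x y y (hC.mem_right x y) x (hC.mem_left x y))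

theorem union_eq (hC : IsConvexitySpace C) {x y m : X} (hm : m ∈ C x y) :
    C x m ∪ C m y = C x y :=
  hC.minimal x y _
    (union_subset (hC.convex x y x (hC.mem_left x y) m hm)
      (hC.convex x y m hm y (hC.mem_right x y)))
    (Or.inl (hC.mem_left x m)) (Or.inr (hC.mem_right m y))
    ((hC.preconnected x m).union m (hC.mem_right x m) (hC.mem_left m y) (hC.preconnected m y))

theorem isPreconnected_diff_right (hC : IsConvexitySpace C) {x s : X} (hxs : x ≠ s) :
    IsPreconnected (C x s \ {s}) := by
  rw [isPreconnected_iff_subset_of_disjoint]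
  intro U V hU hV hcov hdisj
  wlog hxU : x ∈ U generalizing U V
  · have hxV : x ∈ V := (hcov ⟨hC.mem_left x s, hxs⟩).resolve_left hxU
    rw [union_comm] at hcov
    rw [inter_comm U] at hdisj
    exact (this V U hV hU hcov hdisj hxV).symm
  have hglue : insert s (C x s ∩ U) = C x s :=
    hC.minimal x s _ (insert_subset (hC.mem_right x s) inter_subset_left)
      (Or.inr ⟨hC.mem_left x s, hxU⟩) (mem_insert s _)
      ((hC.preconnected x s).insert_inter_of_separation (hC.mem_right x s) hU hV hcov hdisj)
  refine Or.inl fun y ⟨hy, hys⟩ => ?_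
  rw [← hglue] at hy
  exact (hy.resolve_left hys).2

theorem eq_of_mem_of_mem_s4 (hC : IsConvexitySpace C) {x s t : X} (hst : s ∈ C x t)
    (hts : t ∈ C x s) : s = t := by
  by_contra hne
  rcases eq_or_ne x s with rfl | hxs
  · rw [hC.self_eq] at hts
    exact hne hts.symm
  have heq : C x s \ {s} = C x t :=
    hC.minimal x t _ (fun y hy => hC.convex x t x (hC.mem_left x t) s hst hy.1)
      ⟨hC.mem_left x s, hxs⟩ ⟨hts, Ne.symm hne⟩ (hC.isPreconnected_diff_right hxs)
  exact (heq ▸ hst).2 rfl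

theorem mem_of_mem_left (hC : IsConvexitySpace C) {x y m a : X} (ha : a ∈ C x m)
    (hm : m ∈ C x y) : m ∈ C a y := by
  have hay : a ∈ C x y := hC.convex x y x (hC.mem_left x y) m hm ha
  rcases (hC.union_eq hay).symm ▸ hm with hma | hma
  · exact hC.eq_of_mem_of_mem_s4 ha hma ▸ hC.mem_left m y
  · exact hma

theorem mem_or_mem (hC : IsConvexitySpace C) {u v a b : X} (ha : a ∈ C u v) (hb : b ∈ C u v) :
    a ∈ C u b ∨ b ∈ C u a := by
  rcases (hC.union_eq hb).symm ▸ ha with hab | hab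
  · exact Or.inl hab
  rcases (hC.union_eq ha).symm ▸ hb with hba | hba
  · exact Or.inr hba
  rw [hC.comm] at hab hba
  exact Or.inl (hC.eq_of_mem_of_mem_s4 hab hba ▸ hC.mem_right u a)

theorem eventually_inter_eq_empty (hC : IsConvexitySpace C) {F : Set X} (hF : IsClosed F)
    {p q x : X} (hx : x ∈ C p q) (hxF : C x q ∩ F = ∅) :
    ∀ᶠ y in 𝓝[C p q] x, C y q ∩ F = ∅ := by
  have hxF' : x ∈ Fᶜ := fun h => hxF.subset ⟨hC.mem_left x q, h⟩
  obtain ⟨M, hM, hxM, hMF, hMconv⟩ := hC.basis x Fᶜ hF.isOpen_compl hxF'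
  refine mem_nhdsWithin.2 ⟨M, hM, hxM, fun y ⟨hyM, hy⟩ => ?_⟩
  change C y q ∩ F = ∅
  rcases (hC.union_eq hx).symm ▸ hy with hyx | hyx
  · rw [← hC.union_eq (hC.mem_of_mem_left hyx hx), union_inter_distrib_right, hxF,
      union_empty]
    exact disjoint_iff_inter_eq_empty.1
      (disjoint_compl_left.mono_left ((hMconv y hyM x hxM).trans hMF))
  · exact subset_eq_empty (inter_subset_inter_left F
      (hC.convex x q y hyx q (hC.mem_right x q))) hxF

theorem eventually_mem (hC : IsConvexitySpace C) {p q x k : X} (hx : x ∈ C p q)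
    (hk : k ∈ C x q) (hkx : k ≠ x) : ∀ᶠ y in 𝓝[C p q] x, k ∈ C y q := by
  obtain ⟨M, hM, hxM, hMk, hMconv⟩ :=
    hC.basis x {k}ᶜ isClosed_singleton.isOpen_compl hkx.symm
  refine mem_nhdsWithin.2 ⟨M, hM, hxM, fun y ⟨hyM, hy⟩ => ?_⟩
  rcases (hC.union_eq hx).symm ▸ hy with hyx | hyx
  · exact hC.convex y q x (hC.mem_of_mem_left hyx hx) q (hC.mem_right y q) hk
  · rcases hC.mem_or_mem hk hyx with hky | hyk
    · exact (hMk (hMconv x hxM y hyM hky) rfl).elim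
    · exact hC.mem_of_mem_left hyk hk

theorem exists_last_mem (hC : IsConvexitySpace C) {F : Set X} (hF : IsClosed F) {p q : X}
    (hp : p ∈ F) (hq : q ∉ F) : ∃ σ ∈ F, σ ∈ C p q ∧ C σ q ∩ F ⊆ {σ} := by
  by_contra! hlast
  -- Without a last point of `F`, "`C y q` misses `F`" is locally constant along `C p q`.
  have hconst : C p q ∩ F = ∅ ↔ C q q ∩ F = ∅ := by
    refine (hC.preconnected p q).induction₂ (fun x y => C x q ∩ F = ∅ ↔ C y q ∩ F = ∅)
      (fun x hx => ?_) (fun _ _ _ _ _ _ => Iff.trans) (fun _ _ _ _ => Iff.symm)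
      (hC.mem_left p q) (hC.mem_right p q)
    by_cases hxF : C x q ∩ F = ∅
    · filter_upwards [hC.eventually_inter_eq_empty hF hx hxF] with y hy
      simp only [hxF, hy]
    · obtain ⟨k, ⟨hk, hkF⟩, hkx⟩ : ∃ k ∈ C x q ∩ F, k ≠ x := by
        obtain ⟨k, hkq, hkF⟩ := nonempty_iff_ne_empty.2 hxF
        by_cases hxF' : x ∈ F
        · exact not_subset.1 (hlast x hxF' hx)
        · exact ⟨k, ⟨hkq, hkF⟩, fun h => hxF' (h ▸ hkF)⟩
      filter_upwards [hC.eventually_mem hx hk hkx] with y hy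
      simp only [hxF, false_iff]
      exact nonempty_iff_ne_empty.1 ⟨k, hy, hkF⟩
  rw [hC.self_eq, singleton_inter_eq_empty.2 hq] at hconst
  exact hconst.2 rfl |>.subset ⟨hC.mem_left p q, hp⟩

theorem not_inter_closure_subset_pair (hC : IsConvexitySpace C) {A : Set X}
    (hA : ConvexWRT C A) {σ τ : X} (hσ : σ ∈ closure A) (hτ : τ ∈ closure A) (hne : σ ≠ τ) :
    ¬ C σ τ ∩ closure A ⊆ {σ, τ} := by
  intro hsub
  obtain ⟨O, O', hO, hO', hσO, hτO', hOO'⟩ := t2_separation hne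
  have hW : C σ τ ⊆ O ∪ O' ∪ (closure A)ᶜ := by
    intro c hc
    by_cases hcA : c ∈ closure A
    · rcases hsub ⟨hc, hcA⟩ with rfl | rfl
      · exact Or.inl (Or.inl hσO)
      · exact Or.inl (Or.inr hτO')
    · exact Or.inr hcA
  -- Points of `A` near `σ` and `τ` are joined inside `A ∩ (O ∪ O' ∪ (closure A)ᶜ) ⊆ O ∪ O'`.
  obtain ⟨V, V', hV, hV', hσV, hτV', hcont⟩ :=
    hC.continuity σ τ _ ((hO.union hO').union isClosed_closure.isOpen_compl) hW
  obtain ⟨a, ⟨haV, haO⟩, haA⟩ := mem_closure_iff.1 hσ (V ∩ O) (hV.inter hO) ⟨hσV, hσO⟩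
  obtain ⟨b, ⟨hbV', hbO'⟩, hbA⟩ := mem_closure_iff.1 hτ (V' ∩ O') (hV'.inter hO') ⟨hτV', hτO'⟩
  have hab : C a b ⊆ O ∪ O' := fun c hc =>
    (hcont a haV b hbV' hc).resolve_right (not_not_intro (subset_closure (hA a haA b hbA hc)))
  obtain ⟨c, -, hcO, hcO'⟩ := hC.preconnected a b O O' hO hO' hab
    ⟨a, hC.mem_left a b, haO⟩ ⟨b, hC.mem_right a b, hbO'⟩
  exact disjoint_left.1 hOO' hcO hcO'

end IsConvexitySpace

/-- Proposition 3: Let `X` be a convexity space. The closure of any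
convex subset of `X` is convex. -/
theorem stmt_4 {X : Type*} [TopologicalSpace X] [T2Space X] {C : X → X → Set X}
    (hC : IsConvexitySpace C) (A : Set X) (hA : ConvexWRT C A) :
    ConvexWRT C (closure A) := by
  intro u hu v hv z hz
  by_contra hzA
  obtain ⟨σ, hσA, hσ, hσlast⟩ := hC.exists_last_mem isClosed_closure hu hzA
  obtain ⟨τ, hτA, hτ, hτlast⟩ := hC.exists_last_mem isClosed_closure hv hzA
  have hzτ : z ∈ C u τ := hC.comm τ u ▸ hC.mem_of_mem_left hτ (hC.comm u v ▸ hz)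
  have hzστ : z ∈ C σ τ := hC.mem_of_mem_left hσ hzτ
  have hne : σ ≠ τ := by
    rintro rfl
    rw [hC.self_eq, mem_singleton_iff] at hzστ
    exact hzA (hzστ ▸ hσA)
  refine hC.not_inter_closure_subset_pair hA hσA hτA hne fun c ⟨hc, hcA⟩ => ?_
  rcases (hC.union_eq hzστ).symm ▸ hc with hcσ | hcτ
  · exact Or.inl (hσlast ⟨hcσ, hcA⟩)
  · exact Or.inr (hτlast ⟨hC.comm z τ ▸ hcτ, hcA⟩)
end

section
/- Let f : X → Y be a continuous map between topological spaces that is locally open onto its image. Then the induced map f# : X^f → Y is filtered: f# is locally open onto its image, and the map sending a point p ∈ X^f to the pair (f#(p), f#(𝓝(p))) is injective. -/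
/-- A continuous map `f : X → Y` is *locally open onto its image* if every `x ∈ X` has an
open neighbourhood `U` such that the induced map `U → f(U)` is open, where `f(U)` carries
the subspace topology from `Y` (equivalently: the image of every open `W ⊆ U` is
relatively open in `f(U)`). -/
def IsLocallyOpenOntoImage {X Y : Type*} [TopologicalSpace X] [TopologicalSpace Y]
    (f : X → Y) : Prop :=
  ∀ x : X, ∃ U : Set X, IsOpen U ∧ x ∈ U ∧
    ∀ W : Set X, W ⊆ U → IsOpen W → ∃ O : Set Y, IsOpen O ∧ f '' W = O ∩ f '' U

/-- The equivalence relation on `X` identifying `x` and `x'` iff `f x = f x'` and the image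
filters `f(𝓝 x)` and `f(𝓝 x')` coincide. -/
def nhdsSetoid {X Y : Type*} [TopologicalSpace X] (f : X → Y) : Setoid X where
  r a b := f a = f b ∧ Filter.map f (nhds a) = Filter.map f (nhds b)
  iseqv := ⟨fun _ => ⟨rfl, rfl⟩, fun h => ⟨h.1.symm, h.2.symm⟩,
    fun h h' => ⟨h.1.trans h'.1, h.2.trans h'.2⟩⟩

/-- The space `X^f`: the quotient of `X` by the relation `x ~ x'` iff `f x = f x'` and
`f(𝓝 x) = f(𝓝 x')`, endowed with the quotient topology. -/
abbrev SpaceXf {X Y : Type*} [TopologicalSpace X] (f : X → Y) : Type _ :=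
  Quotient (nhdsSetoid f)

/-- The canonical quotient map `q^f : X → X^f`. -/
def qMap {X Y : Type*} [TopologicalSpace X] (f : X → Y) : X → SpaceXf f :=
  Quotient.mk (nhdsSetoid f)

/-- The induced map `f# : X^f → Y` with `f = f# ∘ q^f`. -/
def fSharp {X Y : Type*} [TopologicalSpace X] (f : X → Y) : SpaceXf f → Y :=
  Quotient.lift f fun _ _ h => h.1

/-!
Where `f` is open onto its image on an open set `U`, the image filter `f(𝓝 x)` is the trace
`𝓝[f(U)] (f x)` of the neighbourhood filter of `f x`. So two such sets `A` and `B` with the same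
image have all their points identified in `X^f` as soon as they lie over the same point of `Y`.
If `x ~ z` with `x` in an open `W`, the equal germs at `f x = f z` let one shrink the
local-openness neighbourhoods of `x` (inside `W`) and of `z` to open sets with the same image;
hence the saturation of `W` is open, `q^f` is an open quotient map, `f#(𝓝 (q x)) = f(𝓝 x)`,
and both properties of `f#` descend from those of `f`.
-/

open Filter Set Topology

section

variable {X Q Y : Type*} [TopologicalSpace X] [TopologicalSpace Q] [TopologicalSpace Y]

def IsOpenOntoImageOn (f : X → Y) (U : Set X) : Prop :=
  ∀ W ⊆ U, IsOpen W → ∃ O : Set Y, IsOpen O ∧ f '' W = O ∩ f '' U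

namespace IsOpenOntoImageOn

variable {f : X → Y} {U V : Set X}

theorem mono (hU : IsOpenOntoImageOn f U) (hVU : V ⊆ U) : IsOpenOntoImageOn f V := by
  intro W hWV hW
  obtain ⟨O, hO, hOW⟩ := hU W (hWV.trans hVU) hW
  refine ⟨O, hO, subset_antisymm (subset_inter ?_ (image_mono hWV)) ?_⟩
  · exact hOW ▸ inter_subset_left
  · exact fun y hy => hOW ▸ ⟨hy.1, image_mono hVU hy.2⟩

theorem map_nhds_eq (hU : IsOpenOntoImageOn f U) (hUo : IsOpen U) {x : X} (hx : x ∈ U)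
    (hf : ContinuousAt f x) : map f (𝓝 x) = 𝓝[f '' U] (f x) := by
  refine le_antisymm ?_ fun S hS => ?_
  · exact tendsto_nhdsWithin_iff.2
      ⟨hf, eventually_of_mem (hUo.mem_nhds hx) fun y hy => mem_image_of_mem f hy⟩
  · obtain ⟨V, hVS, hVo, hxV⟩ := mem_nhds_iff.1 (inter_mem (mem_map.1 hS) (hUo.mem_nhds hx))
    obtain ⟨O, hO, hVO⟩ := hU V (hVS.trans inter_subset_right) hVo
    refine mem_nhdsWithin.2 ⟨O, hO, (hVO ▸ mem_image_of_mem f hxV).1, ?_⟩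
    rw [← hVO, image_subset_iff]
    exact hVS.trans inter_subset_left

theorem of_comp {q : X → Q} {g : Q → Y} (hq : Continuous q) (hUo : IsOpen U)
    (hU : IsOpenOntoImageOn (g ∘ q) U) : IsOpenOntoImageOn g (q '' U) := by
  intro W hWU hW
  obtain ⟨O, hO, hOW⟩ := hU (q ⁻¹' W ∩ U) inter_subset_right ((hW.preimage hq).inter hUo)
  rw [image_comp, image_comp, image_preimage_inter, inter_eq_left.2 hWU] at hOW
  exact ⟨O, hO, hOW⟩

end IsOpenOntoImageOn

theorem IsLocallyOpenOntoImage.of_comp {q : X → Q} {g : Q → Y} (hq : IsOpenQuotientMap q)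
    (h : IsLocallyOpenOntoImage (g ∘ q)) : IsLocallyOpenOntoImage g := by
  intro p
  obtain ⟨x, rfl⟩ := hq.surjective p
  obtain ⟨U, hUo, hxU, hU⟩ := h x
  exact ⟨q '' U, hq.isOpenMap U hUo, mem_image_of_mem q hxU,
    IsOpenOntoImageOn.of_comp hq.continuous hUo hU⟩

end

section

variable {X Y : Type*} [TopologicalSpace X] [TopologicalSpace Y] {f : X → Y}

theorem qMap_eq_of_image_eq (hf : Continuous f) {A B : Set X} (hAo : IsOpen A) (hBo : IsOpen B)
    (hA : IsOpenOntoImageOn f A) (hB : IsOpenOntoImageOn f B) (hAB : f '' A = f '' B)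
    {z : X} (hz : z ∈ B) : ∃ x ∈ A, qMap f x = qMap f z := by
  obtain ⟨x, hxA, hxz⟩ := hAB ▸ mem_image_of_mem f hz
  refine ⟨x, hxA, Quotient.sound ⟨hxz, ?_⟩⟩
  rw [hA.map_nhds_eq hAo hxA hf.continuousAt, hB.map_nhds_eq hBo hz hf.continuousAt, hAB, hxz]

theorem qMap_preimage_image_mem_nhds (hf : Continuous f) (h : IsLocallyOpenOntoImage f)
    {W : Set X} (hW : IsOpen W) {x z : X} (hxW : x ∈ W) (hxz : qMap f x = qMap f z) :
    qMap f ⁻¹' (qMap f '' W) ∈ 𝓝 z := by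
  obtain ⟨hfxz, hgerm⟩ := Quotient.exact hxz
  obtain ⟨Ux, hUxo, hxUx, hUx : IsOpenOntoImageOn f Ux⟩ := h x
  obtain ⟨Uz, hUzo, hzUz, hUz : IsOpenOntoImageOn f Uz⟩ := h z
  have hVo : IsOpen (W ∩ Ux) := hW.inter hUxo
  have hV : IsOpenOntoImageOn f (W ∩ Ux) := hUx.mono inter_subset_right
  have hgerm' : 𝓝[f '' (W ∩ Ux)] (f z) = 𝓝[f '' Uz] (f z) := by
    rw [← hUz.map_nhds_eq hUzo hzUz hf.continuousAt, ← hgerm,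
      hV.map_nhds_eq hVo ⟨hxW, hxUx⟩ hf.continuousAt, hfxz]
  obtain ⟨O, hO, hOo, hzO⟩ :=
    eventually_nhds_iff.1 (eventuallyEq_set.1 (nhdsWithin_eq_iff_eventuallyEq.1 hgerm'))
  have hAB : f '' (W ∩ Ux ∩ f ⁻¹' O) = f '' (Uz ∩ f ⁻¹' O) := by
    ext y
    simp only [image_inter_preimage, mem_inter_iff]
    exact and_congr_left (hO y)
  have hBo : IsOpen (Uz ∩ f ⁻¹' O) := hUzo.inter (hOo.preimage hf)
  filter_upwards [hBo.mem_nhds ⟨hzUz, hzO⟩] with z' hz'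
  obtain ⟨x', hx', hx'z'⟩ := qMap_eq_of_image_eq hf (hVo.inter (hOo.preimage hf)) hBo
    (hV.mono inter_subset_left) (hUz.mono inter_subset_left) hAB hz'
  exact ⟨x', hx'.1.1, hx'z'⟩

theorem isOpenQuotientMap_qMap (hf : Continuous f) (h : IsLocallyOpenOntoImage f) :
    IsOpenQuotientMap (qMap f) := by
  refine ⟨Quotient.mk_surjective, continuous_quot_mk, fun W hW => ?_⟩
  rw [← isQuotientMap_quotient_mk'.isOpen_preimage, isOpen_iff_mem_nhds]
  rintro z ⟨x, hxW, hxz⟩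
  exact qMap_preimage_image_mem_nhds hf h hW hxW hxz

end

/-- part of Proposition 5: Let `f : X → Y` be a continuous map between
topological spaces that is locally open onto its image.  Then the induced map
`f# : X^f → Y` is filtered: `f#` is locally open onto its image, and the map sending a
point `p ∈ X^f` to the pair `(f#(p), f#(𝓝 p))` is injective. -/
theorem stmt_8 {X Y : Type*} [TopologicalSpace X] [TopologicalSpace Y]
    (f : X → Y) (hf : Continuous f) (h : IsLocallyOpenOntoImage f) :
    IsLocallyOpenOntoImage (fSharp f) ∧
    Function.Injective
      (fun p : SpaceXf f => (fSharp f p, Filter.map (fSharp f) (nhds p))) := by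
  have hq := isOpenQuotientMap_qMap hf h
  have hfactor : fSharp f ∘ qMap f = f := rfl
  have hmap (x : X) : map (fSharp f) (𝓝 (qMap f x)) = map f (𝓝 x) := by
    rw [← hq.map_nhds_eq, map_map, hfactor]
  refine ⟨IsLocallyOpenOntoImage.of_comp hq (hfactor ▸ h), ?_⟩
  rintro ⟨x⟩ ⟨x'⟩ hxx'
  obtain ⟨hfxx', hgerm⟩ := Prod.ext_iff.1 hxx'
  exact Quotient.sound ⟨hfxx', (hmap x).symm.trans (hgerm.trans (hmap x'))⟩
end
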